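/- arXiv:2410.15506 — 2 statements merged into one kernel-verified Lean document; each statement's English description precedes it below -/
import Mathlib

section
/- Let G = (L ⊔ R, E) be a bipartite graph with uniform left degree that is a (K, δ/2)-disperser, and let C ⊆ Σ^R be a code with relative distance at least δ. Then for any two distinct codewords c^1, c^2 ∈ C, the number of left vertices v such that G(c^1)(v) = G(c^2)(v) is strictly less than K. Consequently, the graph-concatenated code G(C) has minimum distance greater than |L| − K. -/
/-!
If two distinct codewords `c₁, c₂` of `C` had concatenations agreeing on a set `S` of at least
`K` left vertices, then `c₁` and `c₂` would agree on the whole neighbourhood `Γ(S)`, which by the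
disperser property covers all but a `δ/2` fraction of `R`. Their distance would then be at most
`δ|R|/2`, while it is at least `δ|R|`; so `δ|R| ≤ 0` and the distance vanishes, i.e. `c₁ = c₂`.
-/

open Finset

theorem card_filter_eq_add_hammingDist {ι : Type*} {β : ι → Type*} [Fintype ι]
    [∀ i, DecidableEq (β i)] (x y : ∀ i, β i) :
    #{i | x i = y i} + hammingDist x y = Fintype.card ι := by
  rw [hammingDist, card_filter_add_card_filter_not, card_univ]

theorem sub_lt_hammingDist_of_card_filter_eq_lt {ι : Type*} {β : ι → Type*} [Fintype ι]
    [∀ i, DecidableEq (β i)] {x y : ∀ i, β i} {K : ℕ} (h : #{i | x i = y i} < K) :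
    (Fintype.card ι : ℝ) - K < hammingDist x y := by
  have h_card : (#{i | x i = y i} : ℝ) + hammingDist x y = Fintype.card ι := by
    exact_mod_cast card_filter_eq_add_hammingDist x y
  have h_lt : (#{i | x i = y i} : ℝ) < K := by exact_mod_cast h
  linarith

/-- The word `G(c)` of the graph-concatenated code. -/
def graphConcat {V R A ι : Type*} (Γ : V → ι → R) (c : R → A) : V → ι → A :=
  fun v i => c (Γ v i)

section Disperser

variable {V R A ι : Type*} [Fintype R] [Fintype ι] [DecidableEq R] [DecidableEq A]
  (Γ : V → ι → R) {c₁ c₂ : R → A}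

theorem biUnion_image_subset_filter_eq {S : Finset V}
    (hS : ∀ v ∈ S, graphConcat Γ c₁ v = graphConcat Γ c₂ v) :
    S.biUnion (fun v => image (Γ v) univ) ⊆ ({r | c₁ r = c₂ r} : Finset R) := by
  intro r hr
  obtain ⟨v, hv, i, -, rfl⟩ := by simpa only [mem_biUnion, mem_image] using hr
  exact mem_filter.mpr ⟨mem_univ _, congrFun (hS v hv) i⟩

theorem hammingDist_add_card_biUnion_le {S : Finset V}
    (hS : ∀ v ∈ S, graphConcat Γ c₁ v = graphConcat Γ c₂ v) :
    hammingDist c₁ c₂ + #(S.biUnion fun v => image (Γ v) univ) ≤ Fintype.card R := by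
  rw [← card_filter_eq_add_hammingDist c₁ c₂, add_comm]
  exact Nat.add_le_add_right (card_le_card (biUnion_image_subset_filter_eq Γ hS)) _

theorem card_filter_graphConcat_eq_lt [Fintype V] [DecidableEq (ι → A)] {K : ℕ} {δ : ℝ}
    (hG : ∀ S : Finset V, K ≤ #S →
      (1 - δ / 2) * Fintype.card R ≤ (#(S.biUnion fun v => image (Γ v) univ) : ℝ))
    (hdist : δ * Fintype.card R ≤ hammingDist c₁ c₂) (hne : c₁ ≠ c₂) :
    #{v | graphConcat Γ c₁ v = graphConcat Γ c₂ v} < K := by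
  by_contra! hK
  set S : Finset V := {v | graphConcat Γ c₁ v = graphConcat Γ c₂ v}
  have h_cover := hG S hK
  have h_le : (hammingDist c₁ c₂ : ℝ) + #(S.biUnion fun v => image (Γ v) univ)
      ≤ Fintype.card R := by
    exact_mod_cast hammingDist_add_card_biUnion_le Γ fun v hv => (mem_filter.mp hv).2
  have h_zero : (hammingDist c₁ c₂ : ℝ) ≤ 0 := by linarith
  exact hne (hammingDist_eq_zero.mp (by exact_mod_cast h_zero.antisymm (by positivity)))

end Disperser

open Classical in
/-- Distance amplification: if `G` (given by the neighbor map `Γ`) is a `(K, δ/2)`-disperser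
and `C` has relative distance at least `δ`, then any two distinct codewords of `G(C)` agree
on fewer than `K` left vertices, so `G(C)` has minimum distance greater than `|L| - K`. -/
theorem stmt_3 {V R A : Type*} [Fintype V] [Fintype R] {D : ℕ}
    (Γ : V → Fin D → R) (K : ℕ) (δ : ℝ)
    (hG : ∀ S : Finset V, K ≤ S.card →
      (1 - δ / 2) * (Fintype.card R) ≤ ((S.biUnion (fun v => Finset.image (Γ v) Finset.univ)).card : ℝ))
    (C : Set (R → A))
    (hC : ∀ c1 ∈ C, ∀ c2 ∈ C, c1 ≠ c2 → δ * (Fintype.card R) ≤ (hammingDist c1 c2 : ℝ)) :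
    ∀ c1 ∈ C, ∀ c2 ∈ C, c1 ≠ c2 →
      ((Finset.univ.filter (fun v : V => (fun i => c1 (Γ v i)) = (fun i => c2 (Γ v i)))).card < K
      ∧ (Fintype.card V : ℝ) - K <
          (hammingDist (fun v (i : Fin D) => c1 (Γ v i)) (fun v (i : Fin D) => c2 (Γ v i)) : ℝ)) := by
  intro c1 hc1 c2 hc2 hne
  have h_agree := card_filter_graphConcat_eq_lt Γ hG (hC c1 hc1 c2 hc2 hne) hne
  exact ⟨h_agree, sub_lt_hammingDist_of_card_filter_eq_lt h_agree⟩
end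

section
/- Let G be a (K, δ/2)-disperser with N left vertices such that the code G(C) (for C a code of relative distance δ on the right vertices) has minimum distance at least N − K, with K = ε²N/2. Then for any L = ⌊2/ε⌋ distinct codewords Λ of G(C), Σ_{v∈[N]} pl_v(Λ) ≤ N + C(L,2)·(ε²/2)·N < ε·L·N, so G(C) is (1−ε, ⌊2/ε⌋ − 1)-average-radius list decodable. -/
/-!
Count, for each coordinate `v`, the ordered pairs of distinct codewords of `Λ` agreeing at `v`:
a plurality class of size `p` contributes `p(p - 1) ≥ 2p - 2` of them, while swapping the sums
shows that there are at most `L(L - 1) · ε²N/2` such (pair, coordinate) incidences in total. This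
gives `∑_v pl_v(Λ) ≤ N + C(L,2) ε²N/2`, which is `< εLN` by the choice `L = ⌊2/ε⌋`. Finally, the
codewords of `Λ` agree with any word `y` in at most `∑_v pl_v(Λ)` (codeword, coordinate) positions
in total, so their distances to `y` sum to more than `L(1 - ε)N`.
-/

open Classical in
noncomputable def plurality {N : ℕ} {A : Type*} [Fintype A]
    (Λ : Finset (Fin N → A)) (v : Fin N) : ℕ :=
  Finset.univ.sup (fun α : A => (Λ.filter (fun c => c v = α)).card)

open Finset

theorem card_agree_add_hammingDist {ι β : Type*} [Fintype ι] [DecidableEq β] (x y : ι → β) :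
    #{i | x i = y i} + hammingDist x y = Fintype.card ι :=
  card_filter_add_card_filter_not _

section Plurality

open Classical

variable {N : ℕ} {A : Type*} [Fintype A]

theorem card_filter_le_plurality (Λ : Finset (Fin N → A)) (v : Fin N) (α : A) :
    #{c ∈ Λ | c v = α} ≤ plurality Λ v :=
  le_sup (f := fun α => #{c ∈ Λ | c v = α}) (mem_univ α)

theorem two_mul_plurality_le (Λ : Finset (Fin N → A)) (v : Fin N) :
    2 * plurality Λ v ≤ 2 + #{p ∈ Λ.offDiag | p.1 v = p.2 v} := by
  rcases isEmpty_or_nonempty A with _ | _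
  · simp [plurality]
  obtain ⟨α, -, hα⟩ :=
    exists_mem_eq_sup (univ : Finset A) univ_nonempty (fun α : A => #{c ∈ Λ | c v = α})
  set S := {c ∈ Λ | c v = α}
  have hS : S.offDiag ⊆ {p ∈ Λ.offDiag | p.1 v = p.2 v} := by
    intro p hp
    simp only [S, mem_offDiag, mem_filter] at hp ⊢
    exact ⟨⟨hp.1.1, hp.2.1.1, hp.2.2⟩, hp.1.2.trans hp.2.1.2.symm⟩
  have hpairs := card_le_card hS
  rw [offDiag_card] at hpairs
  rw [plurality, hα]
  -- `2p ≤ 2 + p(p - 1)` because `(p - 1)(p - 2) ≥ 0`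
  have : 2 * #S ≤ 2 + (#S * #S - #S) := by
    rcases Nat.lt_or_ge #S 2 with h | h
    · omega
    · have : #S * #S - #S = #S * (#S - 1) := by rw [Nat.mul_sub_one]
      nlinarith [Nat.sub_add_cancel (by omega : 1 ≤ #S)]
  omega

theorem sum_plurality_le (Λ : Finset (Fin N → A)) {a : ℝ}
    (hagree : ∀ c₁ ∈ Λ, ∀ c₂ ∈ Λ, c₁ ≠ c₂ → (#{v | c₁ v = c₂ v} : ℝ) ≤ a) :
    ∑ v, (plurality Λ v : ℝ) ≤ N + (#Λ).choose 2 * a := by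
  have hcount : ∑ v, #{p ∈ Λ.offDiag | p.1 v = p.2 v} = ∑ p ∈ Λ.offDiag, #{v | p.1 v = p.2 v} :=
    sum_card_bipartiteAbove_eq_sum_card_bipartiteBelow
      (fun v (p : (Fin N → A) × (Fin N → A)) => p.1 v = p.2 v)
  have hpairs : (∑ p ∈ Λ.offDiag, #{v | p.1 v = p.2 v} : ℝ) ≤ 2 * (#Λ).choose 2 * a := by
    calc (∑ p ∈ Λ.offDiag, #{v | p.1 v = p.2 v} : ℝ) ≤ ∑ _p ∈ Λ.offDiag, a :=
          sum_le_sum fun p hp => by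
            obtain ⟨h₁, h₂, hne⟩ := mem_offDiag.1 hp
            exact hagree p.1 h₁ p.2 h₂ hne
      _ = 2 * (#Λ).choose 2 * a := by
          rw [sum_const, offDiag_card, nsmul_eq_mul, Nat.cast_choose_two,
            Nat.cast_sub (Nat.le_mul_self _)]
          push_cast; ring
  have hnat : 2 * ∑ v, plurality Λ v ≤ 2 * N + ∑ p ∈ Λ.offDiag, #{v | p.1 v = p.2 v} :=
    calc 2 * ∑ v, plurality Λ v ≤ ∑ v, (2 + #{p ∈ Λ.offDiag | p.1 v = p.2 v}) := by
          rw [mul_sum]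
          exact sum_le_sum fun v _ => two_mul_plurality_le Λ v
      _ = 2 * N + ∑ p ∈ Λ.offDiag, #{v | p.1 v = p.2 v} := by
          rw [sum_add_distrib, hcount]
          simp [mul_comm]
  have hreal := (Nat.cast_le (α := ℝ)).2 hnat
  push_cast at hreal
  linarith

theorem card_mul_le_sum_plurality_add_sum_hammingDist (Λ : Finset (Fin N → A)) (y : Fin N → A) :
    #Λ * N ≤ ∑ v, plurality Λ v + ∑ c ∈ Λ, hammingDist c y := by
  have hcount : ∑ c ∈ Λ, #{v | c v = y v} = ∑ v, #{c ∈ Λ | c v = y v} :=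
    (sum_card_bipartiteAbove_eq_sum_card_bipartiteBelow (fun v (c : Fin N → A) => c v = y v)).symm
  calc #Λ * N = ∑ c ∈ Λ, (#{v | c v = y v} + hammingDist c y) := by
        rw [sum_congr rfl fun c _ => card_agree_add_hammingDist c y]
        simp
    _ = ∑ v, #{c ∈ Λ | c v = y v} + ∑ c ∈ Λ, hammingDist c y := by
        rw [sum_add_distrib, hcount]
    _ ≤ _ := by
        gcongr with v
        exact card_filter_le_plurality Λ v (y v)

end Plurality

theorem one_add_choose_two_mul_lt_floor {ε : ℝ} (hε : 0 < ε) (hL : 1 ≤ ⌊2 / ε⌋₊) :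
    1 + (⌊2 / ε⌋₊.choose 2 : ℝ) * (ε ^ 2 / 2) < ε * ⌊2 / ε⌋₊ := by
  set L := ⌊2 / ε⌋₊
  -- `C(L,2) ε²/2 ≤ ε(L - 1)/2` since `εL ≤ 2`, and `1 + ε(L - 1)/2 < εL` is `2 < ε(L + 1)`
  have hle : ε * L ≤ 2 := by
    have := Nat.floor_le (by positivity : 0 ≤ 2 / ε)
    rw [le_div_iff₀ hε] at this; linarith
  have hlt : 2 < ε * (L + 1) := by
    have := Nat.lt_floor_add_one (2 / ε)
    rw [div_lt_iff₀ hε] at this; linarith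
  have hL' : (1 : ℝ) ≤ L := by exact_mod_cast hL
  rw [Nat.cast_choose_two]
  nlinarith [mul_nonneg (sub_nonneg.2 hL') (sub_nonneg.2 hle)]

open Classical in
theorem stmt_5_general {N : ℕ} {A : Type*} [Fintype A] (C : Finset (Fin N → A))
    (ε : ℝ) (hε : 0 < ε)
    (L : ℕ) (hLdef : L = ⌊(2 : ℝ) / ε⌋₊) (hL2 : 2 ≤ L)
    (hdist : ∀ c1 ∈ C, ∀ c2 ∈ C, c1 ≠ c2 →
      (1 - ε ^ 2 / 2) * N ≤ (hammingDist c1 c2 : ℝ)) :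
    (∀ Λ ⊆ C, Λ.card = L →
      (∑ v, (plurality Λ v : ℝ)) ≤ N + (L.choose 2 : ℝ) * (ε ^ 2 / 2) * N ∧
      (∑ v, (plurality Λ v : ℝ)) < ε * L * N) ∧
    (∀ y : Fin N → A, ∀ Λ ⊆ C, Λ.card = L →
      (L : ℝ) * (1 - ε) * N < ∑ c ∈ Λ, (hammingDist c y : ℝ)) := by
  have hplurality : ∀ Λ ⊆ C, #Λ = L →
      (∑ v, (plurality Λ v : ℝ)) ≤ N + (L.choose 2 : ℝ) * (ε ^ 2 / 2) * N ∧
      (∑ v, (plurality Λ v : ℝ)) < ε * L * N := by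
    intro Λ hΛ hcard
    have hbound : ∑ v, (plurality Λ v : ℝ) ≤ N + (L.choose 2 : ℝ) * (ε ^ 2 / 2 * N) := by
      refine hcard ▸ sum_plurality_le Λ fun c₁ h₁ c₂ h₂ hne => ?_
      have hsplit : (#{v | c₁ v = c₂ v} : ℝ) + hammingDist c₁ c₂ = N := by
        exact_mod_cast card_agree_add_hammingDist c₁ c₂ |>.trans (Fintype.card_fin N)
      linarith [hdist c₁ (hΛ h₁) c₂ (hΛ h₂) hne]
    -- `Fin 0 → A` has a single element, while `Λ` has at least two
    have hN : (0 : ℝ) < N := by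
      refine Nat.cast_pos.2 (Nat.pos_of_ne_zero fun hN => ?_)
      subst hN
      have := Λ.card_le_one_of_subsingleton
      omega
    have hnum := one_add_choose_two_mul_lt_floor hε (hLdef ▸ by omega)
    rw [← hLdef] at hnum
    exact ⟨by linarith, by linarith [mul_lt_mul_of_pos_right hnum hN]⟩
  refine ⟨hplurality, fun y Λ hΛ hcard => ?_⟩
  have hsplit := (Nat.cast_le (α := ℝ)).2 (card_mul_le_sum_plurality_add_sum_hammingDist Λ y)
  push_cast [hcard] at hsplit
  linarith [(hplurality Λ hΛ hcard).2]

open Classical in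
/-- A code of length `N` with minimum distance at least `(1 - ε²/2)·N` satisfies, for any
`L = ⌊2/ε⌋` distinct codewords `Λ`, `∑_v pl_v(Λ) ≤ N + C(L,2)·(ε²/2)·N < ε·L·N`, hence is
`(1 - ε, ⌊2/ε⌋ - 1)`-average-radius list decodable. -/
theorem stmt_5 {N : ℕ} {A : Type*} [Fintype A] (C : Finset (Fin N → A))
    (ε : ℝ) (hε : 0 < ε) (hε1 : ε < 1)
    (L : ℕ) (hLdef : L = ⌊(2 : ℝ) / ε⌋₊) (hL2 : 2 ≤ L)
    (hdist : ∀ c1 ∈ C, ∀ c2 ∈ C, c1 ≠ c2 →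
      (1 - ε ^ 2 / 2) * N ≤ (hammingDist c1 c2 : ℝ)) :
    (∀ Λ ⊆ C, Λ.card = L →
      (∑ v, (plurality Λ v : ℝ)) ≤ N + (L.choose 2 : ℝ) * (ε ^ 2 / 2) * N ∧
      (∑ v, (plurality Λ v : ℝ)) < ε * L * N) ∧
    (∀ y : Fin N → A, ∀ Λ ⊆ C, Λ.card = L →
      (L : ℝ) * (1 - ε) * N < ∑ c ∈ Λ, (hammingDist c y : ℝ)) :=
  stmt_5_general C ε hε L hLdef hL2 hdist
end
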